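/- (Finite-temperature approximation of the Top-Cycle score) Let P be a probabilistic tournament on n agents satisfying the margin assumption with margin δ > 0, and fix a path-length parameter K ≥ 1. For each agent a let t_0(a) := lim_{τ→0⁺} t_τ(a) (this limit exists). Then there exist constants C > 0 and τ₀ > 0, depending on δ, K and n but not on τ, such that for all τ ∈ (0, τ₀) and all agents a: |t_τ(a) − t_0(a)| ≤ C · τ. -/

import Mathlib

open Filter Topology

/-- The logistic sigmoid. -/
noncomputable def sigmoid (z : ℝ) : ℝ := 1 / (1 + Real.exp (-z))

/-- Soft majority edge matrix `D_τ`. -/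
noncomputable def softEdge {n : ℕ} (P : Matrix (Fin n) (Fin n) ℝ) (τ : ℝ) :
    Matrix (Fin n) (Fin n) ℝ := fun a b => sigmoid ((P a b - 1/2) / τ)

/-- 0/1 adjacency matrix of the hard majority tournament. -/
noncomputable def hardAdj {n : ℕ} (P : Matrix (Fin n) (Fin n) ℝ) : Matrix (Fin n) (Fin n) ℝ :=
  fun a b => if 1/2 < P a b then 1 else 0

/-- Soft reachability matrix `R_τ = Σ_{k=1}^K D_τ^k`. -/
noncomputable def softReach {n : ℕ} (P : Matrix (Fin n) (Fin n) ℝ) (τ : ℝ) (K : ℕ) :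
    Matrix (Fin n) (Fin n) ℝ := ∑ k ∈ Finset.Icc 1 K, softEdge P τ ^ k

/-- softmin over a finite family. -/
noncomputable def softmin {ι : Type*} (τ : ℝ) (s : Finset ι) (f : ι → ℝ) : ℝ :=
  -τ * Real.log (∑ i ∈ s, Real.exp (-(f i) / τ))

/-- scalar soft maximum over a finite family. -/
noncomputable def smax {ι : Type*} (τ : ℝ) (s : Finset ι) (f : ι → ℝ) : ℝ :=
  τ * Real.log (∑ i ∈ s, Real.exp (f i / τ))

/-- Soft Top-Cycle membership score `t_τ(a)`. -/
noncomputable def tcScore {n : ℕ} (P : Matrix (Fin n) (Fin n) ℝ) (τ : ℝ) (K : ℕ) (a : Fin n) : ℝ :=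
  softmin τ ({a}ᶜ : Finset (Fin n)) (fun b => softReach P τ K a b)

/-- Soft cover score `cover_τ(c, a)`. -/
noncomputable def coverScore {n : ℕ} (P : Matrix (Fin n) (Fin n) ℝ) (τ : ℝ) (c a : Fin n) : ℝ :=
  softEdge P τ c a *
    (1 - smax τ (Finset.univ : Finset (Fin n)) (fun b => softEdge P τ a b - softEdge P τ c b))

/-- Soft Uncovered-Set membership score `u_τ(a)`. -/
noncomputable def ucScore {n : ℕ} (P : Matrix (Fin n) (Fin n) ℝ) (τ : ℝ) (a : Fin n) : ℝ :=
  1 - smax τ ({a}ᶜ : Finset (Fin n)) (fun c => coverScore P τ c a)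

/-- `a ≻ b` in the hard majority tournament. -/
def beats {n : ℕ} (P : Matrix (Fin n) (Fin n) ℝ) (a b : Fin n) : Prop := 1/2 < P a b

/-- `a` reaches `b` via a directed path in the hard majority tournament. -/
def reaches {n : ℕ} (P : Matrix (Fin n) (Fin n) ℝ) : Fin n → Fin n → Prop :=
  Relation.TransGen (beats P)

/-- `c` covers `a` in the hard majority tournament. -/
def covers {n : ℕ} (P : Matrix (Fin n) (Fin n) ℝ) (c a : Fin n) : Prop :=
  beats P c a ∧ ∀ b, beats P a b → beats P c b

/-- membership in the Top Cycle of the hard majority tournament. -/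
def inTopCycle {n : ℕ} (P : Matrix (Fin n) (Fin n) ℝ) (a : Fin n) : Prop :=
  ∀ b, b ≠ a → reaches P a b

/-- membership in the Uncovered Set of the hard majority tournament. -/
def inUncovered {n : ℕ} (P : Matrix (Fin n) (Fin n) ℝ) (a : Fin n) : Prop :=
  ∀ c, c ≠ a → ¬ covers P c a

/-- `P` is a probabilistic tournament. -/
def IsProbTournament {n : ℕ} (P : Matrix (Fin n) (Fin n) ℝ) : Prop :=
  (∀ a b, 0 ≤ P a b ∧ P a b ≤ 1) ∧ (∀ a b, P a b + P b a = 1) ∧ ∀ a, P a a = 1/2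

/-- margin assumption with margin `δ`. -/
def HasMargin {n : ℕ} (P : Matrix (Fin n) (Fin n) ℝ) (δ : ℝ) : Prop :=
  ∀ a b, a ≠ b → δ ≤ |P a b - 1/2|

/-!
Off the diagonal the margin keeps every logit `(P a b - 1/2) / τ` at distance at least `δ / τ`
from `0`, so every entry of `D_τ` lies within `exp (-δ / τ) ≤ τ / δ` of its zero-temperature value
(`1`, `0`, or `1/2` on the diagonal). Entries of powers of matrices with entries in `[-1, 1]`
depend Lipschitz-continuously on the entries, so `R_τ` is within `O(exp (-δ / τ))` of its
zero-temperature counterpart `R₀`. Finally `softmin_τ` is `1`-Lipschitz for the sup norm and lies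
within `τ log n` of the minimum, so `t₀ a = min_{b ≠ a} R₀ a b` and `|t_τ a - t₀ a| = O(τ)`.
-/

/-- The limit of `sigmoid (z / τ)` as `τ → 0⁺`, hence the value `1/2` at `0`. -/
noncomputable def heaviside (z : ℝ) : ℝ := if 0 < z then 1 else if z < 0 then 0 else 1/2

lemma sigmoid_eq_real_sigmoid : sigmoid = Real.sigmoid := funext fun _ => one_div _

lemma abs_heaviside_le_one (z : ℝ) : |heaviside z| ≤ 1 := by
  unfold heaviside; split_ifs <;> norm_num

lemma abs_sigmoid_div_sub_heaviside_le (τ z : ℝ) :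
    |sigmoid (z / τ) - heaviside z| ≤ Real.exp (-|z| / τ) := by
  rw [sigmoid_eq_real_sigmoid]
  rcases lt_trichotomy z 0 with hz | rfl | hz
  · rw [heaviside, if_neg hz.not_gt, if_pos hz, sub_zero, abs_of_pos (Real.sigmoid_pos _),
      abs_of_neg hz, neg_neg]
    calc Real.sigmoid (z / τ) = Real.sigmoid (-(z / τ)) * Real.exp (z / τ) := by
          have h := Real.sigmoid_mul_rexp_neg (-(z / τ))
          rw [neg_neg] at h
          exact h.symm
      _ ≤ Real.exp (z / τ) := mul_le_of_le_one_left (Real.exp_pos _).le (Real.sigmoid_le_one _)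
  · simp [heaviside, Real.sigmoid_zero]
  · rw [heaviside, if_pos hz, abs_sub_comm, abs_of_pos (sub_pos.2 (Real.sigmoid_lt_one _)),
      abs_of_pos hz, ← Real.sigmoid_neg, neg_div]
    calc Real.sigmoid (-(z / τ)) = Real.sigmoid (z / τ) * Real.exp (-(z / τ)) :=
          (Real.sigmoid_mul_rexp_neg _).symm
      _ ≤ Real.exp (-(z / τ)) := mul_le_of_le_one_left (Real.exp_pos _).le (Real.sigmoid_le_one _)

lemma exp_neg_div_le_div {δ τ : ℝ} (hδ : 0 < δ) (hτ : 0 < τ) : Real.exp (-δ / τ) ≤ τ / δ := by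
  have h := inv_anti₀ (div_pos hδ hτ)
    ((le_add_of_nonneg_right zero_le_one).trans (Real.add_one_le_exp (δ / τ)))
  rwa [inv_div, ← Real.exp_neg, ← neg_div] at h

lemma tendsto_nhdsGT_of_abs_sub_le_mul {f : ℝ → ℝ} {L C : ℝ} (h : ∀ τ, 0 < τ → |f τ - L| ≤ C * τ) :
    Tendsto f (𝓝[>] 0) (𝓝 L) := by
  have hlin : Tendsto (fun τ : ℝ => C * τ) (𝓝[>] 0) (𝓝 0) :=
    ((continuous_const.mul continuous_id).tendsto' 0 0 (by simp)).mono_left nhdsWithin_le_nhds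
  exact tendsto_sub_nhds_zero_iff.1 (squeeze_zero_norm' (eventually_nhdsWithin_of_forall h) hlin)

section Softmin

variable {ι : Type*} {τ : ℝ} {s : Finset ι}

lemma softmin_add_const (hτ : τ ≠ 0) (hs : s.Nonempty) (f : ι → ℝ) (c : ℝ) :
    softmin τ s (fun i => f i + c) = softmin τ s f + c := by
  have hsum : ∑ i ∈ s, Real.exp (-(f i + c) / τ) = Real.exp (-c / τ) * ∑ i ∈ s, Real.exp (-f i / τ) := by
    rw [Finset.mul_sum]
    refine Finset.sum_congr rfl fun i _ => ?_
    rw [← Real.exp_add]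
    ring_nf
  have hpos : 0 < ∑ i ∈ s, Real.exp (-f i / τ) := Finset.sum_pos (fun i _ => Real.exp_pos _) hs
  unfold softmin
  rw [hsum, Real.log_mul (Real.exp_pos _).ne' hpos.ne', Real.log_exp]
  field_simp
  ring

lemma softmin_const (hτ : τ ≠ 0) (hs : s.Nonempty) (c : ℝ) :
    softmin τ s (fun _ => c) = c - τ * Real.log s.card := by
  unfold softmin
  rw [Finset.sum_const, nsmul_eq_mul,
    Real.log_mul (Nat.cast_ne_zero.2 hs.card_pos.ne') (Real.exp_pos _).ne', Real.log_exp]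
  field_simp
  ring

lemma softmin_mono (hτ : 0 < τ) (hs : s.Nonempty) {f g : ι → ℝ} (h : ∀ i ∈ s, f i ≤ g i) :
    softmin τ s f ≤ softmin τ s g := by
  unfold softmin
  rw [neg_mul, neg_mul, neg_le_neg_iff]
  gcongr with i hi
  exact h i hi

lemma softmin_le (hτ : 0 < τ) {i : ι} (hi : i ∈ s) (f : ι → ℝ) : softmin τ s f ≤ f i := by
  have hterm : Real.exp (-f i / τ) ≤ ∑ j ∈ s, Real.exp (-f j / τ) :=
    Finset.single_le_sum (f := fun j => Real.exp (-f j / τ)) (fun j _ => (Real.exp_pos _).le) hi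
  have hlog : -f i / τ ≤ Real.log (∑ j ∈ s, Real.exp (-f j / τ)) :=
    (Real.le_log_iff_exp_le ((Real.exp_pos _).trans_le hterm)).2 hterm
  rw [div_le_iff₀ hτ] at hlog
  unfold softmin
  linarith

lemma abs_softmin_sub_softmin_le (hτ : 0 < τ) (hs : s.Nonempty) {f g : ι → ℝ} {ε : ℝ}
    (h : ∀ i ∈ s, |f i - g i| ≤ ε) : |softmin τ s f - softmin τ s g| ≤ ε := by
  have hf := softmin_mono hτ hs (f := f) (g := fun i => g i + ε)
    fun i hi => by linarith [(abs_le.1 (h i hi)).2]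
  have hg := softmin_mono hτ hs (f := g) (g := fun i => f i + ε)
    fun i hi => by linarith [(abs_le.1 (h i hi)).1]
  rw [softmin_add_const hτ.ne' hs] at hf hg
  rw [abs_sub_le_iff]
  constructor <;> linarith

lemma abs_softmin_sub_inf'_le (hτ : 0 < τ) (hs : s.Nonempty) (f : ι → ℝ) :
    |softmin τ s f - s.inf' hs f| ≤ τ * Real.log s.card := by
  obtain ⟨i, hi, hmin⟩ := Finset.exists_mem_eq_inf' hs f
  have upper := softmin_le hτ hi f
  have lower := softmin_mono hτ hs (f := fun _ => s.inf' hs f) (g := f)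
    fun j hj => Finset.inf'_le f hj
  rw [softmin_const hτ.ne' hs] at lower
  have hlog : 0 ≤ τ * Real.log s.card :=
    mul_nonneg hτ.le (Real.log_nonneg (Nat.one_le_cast.2 hs.card_pos))
  rw [abs_le]
  constructor <;> linarith

end Softmin

section MatrixPow

variable {ι : Type*} [Fintype ι] [DecidableEq ι] {A B : Matrix ι ι ℝ}

lemma abs_pow_apply_le (hA : ∀ i j, |A i j| ≤ 1) (k : ℕ) (i j : ι) :
    |(A ^ k) i j| ≤ (Fintype.card ι : ℝ) ^ k := by
  induction k generalizing i j with
  | zero => rw [pow_zero, pow_zero, Matrix.one_apply]; split_ifs <;> norm_num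
  | succ k ih =>
    rw [pow_succ', Matrix.mul_apply]
    calc |∑ c, A i c * (A ^ k) c j| ≤ ∑ c, |A i c| * |(A ^ k) c j| := by
          simpa only [abs_mul] using
            Finset.abs_sum_le_sum_abs (fun c => A i c * (A ^ k) c j) Finset.univ
      _ ≤ ∑ _c : ι, 1 * (Fintype.card ι : ℝ) ^ k :=
          Finset.sum_le_sum fun c _ => mul_le_mul (hA i c) (ih c j) (abs_nonneg _) zero_le_one
      _ = (Fintype.card ι : ℝ) ^ (k + 1) := by
          rw [Finset.sum_const, Finset.card_univ, nsmul_eq_mul, one_mul, pow_succ']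

lemma abs_pow_apply_sub_pow_apply_le (hA : ∀ i j, |A i j| ≤ 1) (hB : ∀ i j, |B i j| ≤ 1) {ε : ℝ}
    (hAB : ∀ i j, |A i j - B i j| ≤ ε) (k : ℕ) (i j : ι) :
    |(A ^ k) i j - (B ^ k) i j| ≤ k * (Fintype.card ι : ℝ) ^ k * ε := by
  induction k generalizing i j with
  | zero => simp
  | succ k ih =>
    rw [pow_succ', pow_succ', Matrix.mul_apply, Matrix.mul_apply, ← Finset.sum_sub_distrib]
    set N := (Fintype.card ι : ℝ)
    calc |∑ c, (A i c * (A ^ k) c j - B i c * (B ^ k) c j)|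
        ≤ ∑ c, |A i c * (A ^ k) c j - B i c * (B ^ k) c j| := Finset.abs_sum_le_sum_abs _ _
      _ ≤ ∑ _c : ι, (1 * (k * N ^ k * ε) + ε * N ^ k) := by
          refine Finset.sum_le_sum fun c _ => ?_
          have hε : 0 ≤ ε := (abs_nonneg _).trans (hAB i c)
          calc |A i c * (A ^ k) c j - B i c * (B ^ k) c j|
              = |A i c * ((A ^ k) c j - (B ^ k) c j) + (A i c - B i c) * (B ^ k) c j| := by
                congr 1; ring
            _ ≤ |A i c| * |(A ^ k) c j - (B ^ k) c j| + |A i c - B i c| * |(B ^ k) c j| := by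
                simpa only [abs_mul] using abs_add_le (A i c * ((A ^ k) c j - (B ^ k) c j))
                  ((A i c - B i c) * (B ^ k) c j)
            _ ≤ 1 * (k * N ^ k * ε) + ε * N ^ k :=
                add_le_add (mul_le_mul (hA i c) (ih c j) (abs_nonneg _) zero_le_one)
                  (mul_le_mul (hAB i c) (abs_pow_apply_le hB k c j) (abs_nonneg _) hε)
      _ = ↑(k + 1) * N ^ (k + 1) * ε := by
          rw [Finset.sum_const, Finset.card_univ, nsmul_eq_mul]
          push_cast
          ring

lemma abs_sum_pow_apply_sub_sum_pow_apply_le (hA : ∀ i j, |A i j| ≤ 1)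
    (hB : ∀ i j, |B i j| ≤ 1) {ε : ℝ} (hAB : ∀ i j, |A i j - B i j| ≤ ε) (s : Finset ℕ)
    (i j : ι) :
    |(∑ k ∈ s, A ^ k) i j - (∑ k ∈ s, B ^ k) i j|
      ≤ (∑ k ∈ s, (k : ℝ) * (Fintype.card ι : ℝ) ^ k) * ε := by
  rw [Matrix.sum_apply, Matrix.sum_apply, ← Finset.sum_sub_distrib, Finset.sum_mul]
  exact (Finset.abs_sum_le_sum_abs _ _).trans
    (Finset.sum_le_sum fun k _ => abs_pow_apply_sub_pow_apply_le hA hB hAB k i j)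

end MatrixPow

section Tournament

variable {n : ℕ} {P : Matrix (Fin n) (Fin n) ℝ} {δ τ : ℝ}

noncomputable def zeroTempEdge (P : Matrix (Fin n) (Fin n) ℝ) : Matrix (Fin n) (Fin n) ℝ :=
  fun a b => heaviside (P a b - 1/2)

noncomputable def zeroTempReach (P : Matrix (Fin n) (Fin n) ℝ) (K : ℕ) :
    Matrix (Fin n) (Fin n) ℝ :=
  ∑ k ∈ Finset.Icc 1 K, zeroTempEdge P ^ k

lemma abs_softEdge_le_one (a b : Fin n) : |softEdge P τ a b| ≤ 1 := by
  rw [softEdge, sigmoid_eq_real_sigmoid, abs_of_nonneg (Real.sigmoid_nonneg _)]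
  exact Real.sigmoid_le_one _

lemma abs_softEdge_sub_zeroTempEdge_le (hdiag : ∀ a, P a a = 1/2) (hmargin : HasMargin P δ)
    (hτ : 0 < τ) (a b : Fin n) :
    |softEdge P τ a b - zeroTempEdge P a b| ≤ Real.exp (-δ / τ) := by
  by_cases hab : a = b
  · subst hab
    simp [softEdge, zeroTempEdge, hdiag, heaviside, sigmoid_eq_real_sigmoid, Real.sigmoid_zero]
    positivity
  · refine (abs_sigmoid_div_sub_heaviside_le τ _).trans (Real.exp_le_exp.2 ?_)
    exact div_le_div_of_nonneg_right (neg_le_neg (hmargin a b hab)) hτ.le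

lemma abs_softReach_sub_zeroTempReach_le (hdiag : ∀ a, P a a = 1/2) (hmargin : HasMargin P δ)
    (hτ : 0 < τ) (K : ℕ) (a b : Fin n) :
    |softReach P τ K a b - zeroTempReach P K a b|
      ≤ (∑ k ∈ Finset.Icc 1 K, (k : ℝ) * (n : ℝ) ^ k) * Real.exp (-δ / τ) := by
  unfold softReach zeroTempReach
  simpa only [Fintype.card_fin] using
    abs_sum_pow_apply_sub_sum_pow_apply_le (B := zeroTempEdge P) abs_softEdge_le_one
      (fun a b => abs_heaviside_le_one _) (abs_softEdge_sub_zeroTempEdge_le hdiag hmargin hτ)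
      (Finset.Icc 1 K) a b

lemma abs_tcScore_sub_inf'_le (hdiag : ∀ a, P a a = 1/2) (hmargin : HasMargin P δ)
    (hτ : 0 < τ) (K : ℕ) {a : Fin n} (hs : ({a}ᶜ : Finset (Fin n)).Nonempty) :
    |tcScore P τ K a - ({a}ᶜ : Finset (Fin n)).inf' hs (zeroTempReach P K a)|
      ≤ (∑ k ∈ Finset.Icc 1 K, (k : ℝ) * (n : ℝ) ^ k) * Real.exp (-δ / τ)
        + τ * Real.log n := by
  have hcard : Real.log (({a}ᶜ : Finset (Fin n)).card) ≤ Real.log n :=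
    Real.log_le_log (Nat.cast_pos.2 hs.card_pos)
      (by exact_mod_cast (Finset.card_le_univ _).trans_eq (Fintype.card_fin n))
  calc |tcScore P τ K a - ({a}ᶜ : Finset (Fin n)).inf' hs (zeroTempReach P K a)|
      ≤ |tcScore P τ K a - softmin τ {a}ᶜ (zeroTempReach P K a)|
        + |softmin τ {a}ᶜ (zeroTempReach P K a)
          - ({a}ᶜ : Finset (Fin n)).inf' hs (zeroTempReach P K a)| := abs_sub_le _ _ _
    _ ≤ _ := add_le_add
        (abs_softmin_sub_softmin_le hτ hs fun b _ =>
          abs_softReach_sub_zeroTempReach_le hdiag hmargin hτ K a b)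
        ((abs_softmin_sub_inf'_le hτ hs _).trans (mul_le_mul_of_nonneg_left hcard hτ.le))

end Tournament

theorem tcScore_finite_temperature_bound_general {n : ℕ} (hn : 2 ≤ n)
    (P : Matrix (Fin n) (Fin n) ℝ) (δ : ℝ) (hδ : 0 < δ)
    (hP : IsProbTournament P) (hmargin : HasMargin P δ) (K : ℕ) :
    ∃ t0 : Fin n → ℝ,
      (∀ a, Tendsto (fun τ : ℝ => tcScore P τ K a) (𝓝[>] (0:ℝ)) (𝓝 (t0 a))) ∧
      ∃ C : ℝ, 0 < C ∧ ∃ τ₀ : ℝ, 0 < τ₀ ∧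
        ∀ τ : ℝ, 0 < τ → τ < τ₀ → ∀ a, |tcScore P τ K a - t0 a| ≤ C * τ := by
  have : Nontrivial (Fin n) := Fin.nontrivial_iff_two_le.2 hn
  have hs (a : Fin n) : ({a}ᶜ : Finset (Fin n)).Nonempty :=
    let ⟨b, hb⟩ := exists_ne a
    ⟨b, by simpa using hb⟩
  set S := ∑ k ∈ Finset.Icc 1 K, (k : ℝ) * (n : ℝ) ^ k
  have hbound (τ : ℝ) (hτ : 0 < τ) (a : Fin n) :
      |tcScore P τ K a - ({a}ᶜ : Finset (Fin n)).inf' (hs a) (zeroTempReach P K a)|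
        ≤ (S / δ + Real.log n) * τ := by
    refine (abs_tcScore_sub_inf'_le hP.2.2 hmargin hτ K (hs a)).trans ?_
    have hS : 0 ≤ S := by positivity
    calc S * Real.exp (-δ / τ) + τ * Real.log n ≤ S * (τ / δ) + τ * Real.log n := by
          gcongr; exact exp_neg_div_le_div hδ hτ
      _ = (S / δ + Real.log n) * τ := by ring
  have hC : 0 < S / δ + Real.log n :=
    add_pos_of_nonneg_of_pos (by positivity) (Real.log_pos (by exact_mod_cast hn))
  exact ⟨fun a => ({a}ᶜ : Finset (Fin n)).inf' (hs a) (zeroTempReach P K a),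
    fun a => tendsto_nhdsGT_of_abs_sub_le_mul fun τ hτ => hbound τ hτ a,
    _, hC, 1, one_pos, fun τ hτ _ a => hbound τ hτ a⟩

/-- finite-temperature approximation of the soft Top-Cycle score:
the zero-temperature limit `t₀` exists and `|t_τ(a) − t₀(a)| ≤ C·τ` for small `τ`. -/
theorem tcScore_finite_temperature_bound {n : ℕ} (hn : 2 ≤ n)
    (P : Matrix (Fin n) (Fin n) ℝ) (δ : ℝ) (hδ : 0 < δ)
    (hP : IsProbTournament P) (hmargin : HasMargin P δ) (K : ℕ) (hK : 1 ≤ K) :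
    ∃ t0 : Fin n → ℝ,
      (∀ a, Tendsto (fun τ : ℝ => tcScore P τ K a) (𝓝[>] (0:ℝ)) (𝓝 (t0 a))) ∧
      ∃ C : ℝ, 0 < C ∧ ∃ τ₀ : ℝ, 0 < τ₀ ∧
        ∀ τ : ℝ, 0 < τ → τ < τ₀ → ∀ a, |tcScore P τ K a - t0 a| ≤ C * τ :=
  tcScore_finite_temperature_bound_general hn P δ hδ hP hmargin K
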